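/- arXiv:2105.06862 — 2 statements merged into one kernel-verified Lean document; each statement's English description precedes it below -/
import Mathlib

section
/- Let r ∈ ℕ₀ and suppose Assumption A1 holds with k = 0. Then there is a constant κ_r > 0, depending only on r, d and the reference integrator Î but not on the interval, such that for every interval I_n = (t_{n−1}, t_n] of length τ_n and every φ ∈ P_r(I_n, ℝ^d): sup_{t∈I_n} ‖φ(t)‖ ≤ κ_r · Σ_{i=0}^{r} ‖ I_n[φ'(t)·(1+T_n^{−1}(t))^i] + δ_{0,i}·φ(t_{n−1}^+) ‖. -/
open Set MeasureTheory
open scoped BigOperators RealInnerProductSpace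

noncomputable section

/-- `ℝ^d` with the Euclidean norm. -/
abbrev Vec (d : ℕ) := EuclideanSpace ℝ (Fin d)

/-- `φ : ℝ → ℝ` is (the evaluation of) a polynomial of degree at most `s`
(`s : ℤ`; for `s < 0` this means the zero function). -/
def IsPolyR (s : ℤ) (φ : ℝ → ℝ) : Prop :=
  ∃ p : Polynomial ℝ, (∀ n : ℕ, s < (n : ℤ) → p.coeff n = 0) ∧ ∀ x : ℝ, φ x = p.eval x

/-- Vector-valued polynomials of degree at most `s`, componentwise. -/
def IsPolyV {d : ℕ} (s : ℤ) (φ : ℝ → Vec d) : Prop :=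
  ∀ i : Fin d, IsPolyR s fun x => φ x i

/-- Componentwise application of a (reference) integrator to a vector-valued function. -/
def vecI {d : ℕ} (Ih : (ℝ → ℝ) →ₗ[ℝ] ℝ) (φ : ℝ → Vec d) : Vec d :=
  WithLp.toLp 2 (fun i => Ih fun x => φ x i)

/-- Componentwise application of a (reference) approximation operator. -/
def vecOp {d : ℕ} (Ic : (ℝ → ℝ) →ₗ[ℝ] (ℝ → ℝ)) (φ : ℝ → Vec d) : ℝ → Vec d :=
  fun x => WithLp.toLp 2 (fun i => Ic (fun y => φ y i) x)

/-- Affine map of the reference interval `(-1,1]` onto `(a,b]`. -/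
def Tmap (a b x : ℝ) : ℝ := (a + b) / 2 + (b - a) / 2 * x

/-- Inverse of `Tmap a b`. -/
def Tinv (a b x : ℝ) : ℝ := (2 * x - (a + b)) / (b - a)

/-- Local (vector-valued) integrator `I_n` on `(a,b]`. -/
def locI {d : ℕ} (Ih : (ℝ → ℝ) →ₗ[ℝ] ℝ) (a b : ℝ) (φ : ℝ → Vec d) : Vec d :=
  ((b - a) / 2) • vecI Ih (φ ∘ Tmap a b)

/-- Local scalar integrator on `(a,b]`. -/
def locIs (Ih : (ℝ → ℝ) →ₗ[ℝ] ℝ) (a b : ℝ) (g : ℝ → ℝ) : ℝ :=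
  (b - a) / 2 * Ih (g ∘ Tmap a b)

/-- Local approximation operator `ℐ_n` on `(a,b]` (vector-valued). -/
def locOp {d : ℕ} (Ic : (ℝ → ℝ) →ₗ[ℝ] (ℝ → ℝ)) (a b : ℝ) (φ : ℝ → Vec d) : ℝ → Vec d :=
  fun x => vecOp Ic (φ ∘ Tmap a b) (Tinv a b x)

/-- Local approximation operator `ℐ_n` on `(a,b]` (scalar). -/
def locOpR (Ic : (ℝ → ℝ) →ₗ[ℝ] (ℝ → ℝ)) (a b : ℝ) (φ : ℝ → ℝ) : ℝ → ℝ :=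
  fun x => Ic (φ ∘ Tmap a b) (Tinv a b x)

/-- Supremum of the (Euclidean) norm over a set of times. -/
def supNorm {d : ℕ} (s : Set ℝ) (φ : ℝ → Vec d) : ℝ := ⨆ x : s, ‖φ (x : ℝ)‖

/-- Supremum of the absolute value over a set of times. -/
def supAbs (s : Set ℝ) (g : ℝ → ℝ) : ℝ := ⨆ x : s, |g (x : ℝ)|

/-- `k_𝒥 = max{⌊k/2⌋ − 1, k_𝓘, k_ℐ}`. -/
def kJ (k : ℤ) (kI kIc : ℕ) : ℕ := max (max (k.fdiv 2 - 1).toNat kI) kIc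

/-- Assumption A1 on the reference integrator. -/
def AssumptionA1 (Ih : (ℝ → ℝ) →ₗ[ℝ] ℝ) (r k : ℤ) : Prop :=
  ∀ ψ : ℝ → ℝ, IsPolyR (r - max 1 k) ψ →
    (∀ φ : ℝ → ℝ, IsPolyR (r - max 1 k) φ →
      Ih (fun x => (1 - x) ^ (k.fdiv 2).toNat * (1 + x) ^ ((k - 1).fdiv 2).natAbs *
        (ψ x * φ x)) = 0) →
    ∀ x : ℝ, ψ x = 0

/-- Assumption A2 on the reference integrator. -/
def AssumptionA2 (d : ℕ) (Ih : (ℝ → ℝ) →ₗ[ℝ] ℝ) (kI : ℕ) (C0 : ℝ) : Prop :=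
  ∀ φ : ℝ → Vec d, ContDiffOn ℝ (kI : ℕ∞) φ (Icc (-1 : ℝ) 1) →
    ‖vecI Ih φ‖ ≤ C0 * ∑ j ∈ Finset.range (kI + 1),
      supNorm (Icc (-1 : ℝ) 1) (iteratedDerivWithin j φ (Icc (-1 : ℝ) 1))

/-- Assumption A3 on the reference approximation operator. -/
def AssumptionA3 (d : ℕ) (Ic : (ℝ → ℝ) →ₗ[ℝ] (ℝ → ℝ)) (kI kIc : ℕ) (C1 : ℝ) : Prop :=
  ∀ l : ℕ, l ≤ kI → ∀ φ : ℝ → Vec d,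
    ContDiffOn ℝ ((max kIc l : ℕ) : ℕ∞) φ (Icc (-1 : ℝ) 1) →
    supNorm (Icc (-1 : ℝ) 1) (iteratedDerivWithin l (vecOp Ic φ) (Icc (-1 : ℝ) 1)) ≤
      C1 * ∑ j ∈ Finset.range (max kIc l + 1),
        supNorm (Icc (-1 : ℝ) 1) (iteratedDerivWithin j φ (Icc (-1 : ℝ) 1))

/-- Assumption A4, with smoothness level `m` playing the role of `k_𝒥`. -/
def AssumptionA4 (d : ℕ) (f : ℝ → Vec d → Vec d) (t0 T C2 : ℝ) (m : ℕ) : Prop :=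
  ∀ i : ℕ, i ≤ m → ∀ v w : ℝ → Vec d, ContDiff ℝ (⊤ : ℕ∞) v → ContDiff ℝ (⊤ : ℕ∞) w →
    ∀ᵐ s ∂(volume.restrict (Icc t0 (t0 + T))),
      ‖iteratedDeriv i (fun x => f x (v x) - f x (w x)) s‖ ≤
        C2 * ∑ l ∈ Finset.range (i + 1), ‖iteratedDeriv l (fun x => v x - w x) s‖

/-- Assumption A5a, stated for all local intervals. -/
def AssumptionA5a (d : ℕ) (Ic : (ℝ → ℝ) →ₗ[ℝ] (ℝ → ℝ)) (kI kIc : ℕ)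
    (K : ℕ) (th : Fin (K + 1) → ℝ) (Kt : Fin (K + 1) → ℕ) (C11 C12 : ℝ) : Prop :=
  Function.Injective th ∧ (∀ m, th m ∈ Icc (-1 : ℝ) 1) ∧
  ∀ a b : ℝ, a < b → b - a ≤ 1 → ∀ l : ℕ, l ≤ kI →
    ∀ φ : ℝ → Vec d, ContDiffOn ℝ (kIc : ℕ∞) φ (Icc a b) →
      ContDiffOn ℝ (l : ℕ∞) (locOp Ic a b φ) (Icc a b) ∧
      ((b - a) / 2) ^ l *
          supNorm (Ioc a b) (iteratedDerivWithin l (locOp Ic a b φ) (Icc a b)) ≤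
        C11 * ∑ m : Fin (K + 1), ∑ j ∈ Finset.range (Kt m + 1),
            ((b - a) / 2) ^ j *
              ‖iteratedDerivWithin j φ (Icc a b) (Tmap a b (th m))‖ +
        C12 * supNorm (Ioc a b) φ

/-- The conditions defining `Ĵ v` on the reference interval. -/
def JCondRef (Ih : (ℝ → ℝ) →ₗ[ℝ] ℝ) (Ic : (ℝ → ℝ) →ₗ[ℝ] (ℝ → ℝ)) (r k : ℤ)
    (v w : ℝ → ℝ) : Prop :=
  IsPolyR r w ∧
  (1 ≤ k → ∀ i : ℕ, (i : ℤ) ≤ (k - 1).fdiv 2 →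
    iteratedDeriv i w (-1) = iteratedDerivWithin i v (Icc (-1 : ℝ) 1) (-1)) ∧
  (2 ≤ k → ∀ i : ℕ, 1 ≤ i → (i : ℤ) ≤ k.fdiv 2 →
    iteratedDeriv i w 1 = iteratedDerivWithin i v (Icc (-1 : ℝ) 1) 1) ∧
  (∀ φ : ℝ → ℝ, IsPolyR (r - k) φ →
    Ih (fun x => deriv w x * φ x) + (if k = 0 then w (-1) * φ (-1) else 0) =
    Ih (fun x => Ic (derivWithin v (Icc (-1 : ℝ) 1)) x * φ x) +
      (if k = 0 then v (-1) * φ (-1) else 0))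

/-- The conditions defining the local approximation `J_n v` on `(a,b]`. -/
def JCondLoc (d : ℕ) (Ih : (ℝ → ℝ) →ₗ[ℝ] ℝ) (Ic : (ℝ → ℝ) →ₗ[ℝ] (ℝ → ℝ)) (r k : ℤ)
    (a b : ℝ) (v w : ℝ → Vec d) : Prop :=
  IsPolyV r w ∧
  (1 ≤ k → ∀ i : ℕ, (i : ℤ) ≤ (k - 1).fdiv 2 →
    iteratedDeriv i w a = iteratedDerivWithin i v (Icc a b) a) ∧
  (2 ≤ k → ∀ i : ℕ, 1 ≤ i → (i : ℤ) ≤ k.fdiv 2 →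
    iteratedDeriv i w b = iteratedDerivWithin i v (Icc a b) b) ∧
  (∀ φ : ℝ → Vec d, IsPolyV (r - k) φ →
    locIs Ih a b (fun x => ⟪deriv w x, φ x⟫) +
        (if k = 0 then ⟪w a, φ a⟫ else 0) =
      locIs Ih a b (fun x => ⟪locOp Ic a b (derivWithin v (Icc a b)) x, φ x⟫) +
        (if k = 0 then ⟪v a, φ a⟫ else 0))

/-- The conditions defining `P̂ v` on the reference interval. -/
def PCondRef (Ih : (ℝ → ℝ) →ₗ[ℝ] ℝ) (Ic : (ℝ → ℝ) →ₗ[ℝ] (ℝ → ℝ)) (r k : ℤ)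
    (v w : ℝ → ℝ) : Prop :=
  IsPolyR (r - 1) w ∧
  (3 ≤ k → ∀ i : ℕ, (i : ℤ) ≤ (k - 1).fdiv 2 - 1 →
    iteratedDeriv i w (-1) = iteratedDerivWithin i v (Icc (-1 : ℝ) 1) (-1)) ∧
  (2 ≤ k → ∀ i : ℕ, (i : ℤ) ≤ k.fdiv 2 - 1 →
    iteratedDeriv i w 1 = iteratedDerivWithin i v (Icc (-1 : ℝ) 1) 1) ∧
  (∀ φ : ℝ → ℝ, IsPolyR (r - k) φ → (k = 0 → φ (-1) = 0) →
    Ih (fun x => w x * φ x) = Ih (fun x => Ic v x * φ x))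

/-- The conditions defining the local approximation `P_n v` on `(a,b]`. -/
def PCondLoc (d : ℕ) (Ih : (ℝ → ℝ) →ₗ[ℝ] ℝ) (Ic : (ℝ → ℝ) →ₗ[ℝ] (ℝ → ℝ)) (r k : ℤ)
    (a b : ℝ) (v w : ℝ → Vec d) : Prop :=
  IsPolyV (r - 1) w ∧
  (3 ≤ k → ∀ i : ℕ, (i : ℤ) ≤ (k - 1).fdiv 2 - 1 →
    iteratedDeriv i w a = iteratedDerivWithin i v (Icc a b) a) ∧
  (2 ≤ k → ∀ i : ℕ, (i : ℤ) ≤ k.fdiv 2 - 1 →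
    iteratedDeriv i w b = iteratedDerivWithin i v (Icc a b) b) ∧
  (∀ φ : ℝ → Vec d, IsPolyV (r - k) φ → (k = 0 → φ a = 0) →
    locIs Ih a b (fun x => ⟪w x, φ x⟫) =
      locIs Ih a b (fun x => ⟪locOp Ic a b v x, φ x⟫))

/-- The local variational time discretization problem on `(a,b]` with incoming value `Uprev`. -/
def LocalVTD (d : ℕ) (Ih : (ℝ → ℝ) →ₗ[ℝ] ℝ) (Ic : (ℝ → ℝ) →ₗ[ℝ] (ℝ → ℝ)) (r k : ℤ)
    (a b : ℝ) (f : ℝ → Vec d → Vec d) (Uprev : Vec d) (U : ℝ → Vec d) : Prop :=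
  IsPolyV r U ∧
  (1 ≤ k → U a = Uprev) ∧
  (2 ≤ k → ∀ i : ℕ, (i : ℤ) ≤ k.fdiv 2 - 1 →
    iteratedDeriv (i + 1) U b = iteratedDeriv i (fun s => f s (U s)) b) ∧
  (3 ≤ k → ∀ i : ℕ, (i : ℤ) ≤ (k - 1).fdiv 2 - 1 →
    iteratedDeriv (i + 1) U a = iteratedDeriv i (fun s => f s (U s)) a) ∧
  (∀ φ : ℝ → Vec d, IsPolyV (r - k) φ →
    locIs Ih a b (fun s => ⟪deriv U s, φ s⟫) +
        (if k = 0 then ⟪U a - Uprev, φ a⟫ else 0) =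
      locIs Ih a b (fun s => ⟪locOp Ic a b (fun x => f x (U x)) s, φ s⟫))

/-- The global discrete solution of the variational time discretization:
`P n` is the local polynomial on `I_n = (t_{n-1}, t_n]`. -/
def IsVTDSolution (d : ℕ) (Ih : (ℝ → ℝ) →ₗ[ℝ] ℝ) (Ic : (ℝ → ℝ) →ₗ[ℝ] (ℝ → ℝ))
    (r k : ℤ) (t : ℕ → ℝ) (N : ℕ) (f : ℝ → Vec d → Vec d) (u0 : Vec d)
    (P : ℕ → ℝ → Vec d) : Prop :=
  ∀ n : ℕ, 1 ≤ n → n ≤ N →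
    LocalVTD d Ih Ic r k (t (n - 1)) (t n) f
      (if n = 1 then u0 else P (n - 1) (t (n - 1))) (P n)

/-- Exactness of the local integrator on polynomials of degree at most `ρ`. -/
def QuadExact (Ih : (ℝ → ℝ) →ₗ[ℝ] ℝ) (a b : ℝ) (ρ : ℤ) : Prop :=
  ∀ φ : ℝ → ℝ, IsPolyR ρ φ → (∫ x in Ioc a b, φ x) = locIs Ih a b φ

/-- `I_n[φ ψ] = I_n[(ℐ_n φ) ψ]` for all `φ ∈ P_ρ` and `ψ ∈ P_i` (the property defining
`r^𝓘_{ℐ,i}`). -/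
def QuadInterpExact (Ih : (ℝ → ℝ) →ₗ[ℝ] ℝ) (Ic : (ℝ → ℝ) →ₗ[ℝ] (ℝ → ℝ))
    (a b : ℝ) (ρ : ℤ) (i : ℕ) : Prop :=
  ∀ φ : ℝ → ℝ, IsPolyR ρ φ → ∀ ψ : ℝ → ℝ, IsPolyR (i : ℤ) ψ →
    locIs Ih a b (fun x => φ x * ψ x) = locIs Ih a b (fun x => locOpR Ic a b φ x * ψ x)

/-- The defining interpolation conditions of the Hermite-type operator `𝓘ᵃᵖᵖ_n` on `(a,b]`. -/
def IsIapp (d : ℕ) (k : ℤ) (K : ℕ) (th : Fin (K + 1) → ℝ) (Kt : Fin (K + 1) → ℕ)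
    (a b : ℝ) (R : ℕ) (J : (ℝ → Vec d) → (ℝ → Vec d)) : Prop :=
  ∀ φ : ℝ → Vec d, ContDiff ℝ (⊤ : ℕ∞) φ →
    IsPolyV (R : ℤ) (J φ) ∧
    (∀ l : ℕ, (l : ℤ) ≤ k.fdiv 2 - 1 → iteratedDeriv l (J φ) b = iteratedDeriv l φ b) ∧
    (∀ l : ℕ, (l : ℤ) ≤ (k - 1).fdiv 2 - 1 →
      iteratedDeriv l (J φ) a = iteratedDeriv l φ a) ∧
    (∀ m : Fin (K + 1), ∀ l : ℕ, l ≤ Kt m →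
      iteratedDeriv l (J φ) (Tmap a b (th m)) = iteratedDeriv l φ (Tmap a b (th m)))

/-- Composition `ℐ¹ ∘ ⋯ ∘ ℐˡ` of a finite family of operators. -/
def compOps (l : ℕ) (Ops : Fin l → ((ℝ → ℝ) →ₗ[ℝ] (ℝ → ℝ))) : (ℝ → ℝ) → (ℝ → ℝ) :=
  (List.ofFn (fun j : Fin l => (Ops j : (ℝ → ℝ) → (ℝ → ℝ)))).foldr (· ∘ ·) id

/-!
On the reference interval the moments `p ↦ (Î[(1+t)^i p'] + δ_{0i} p(-1))_{i ≤ r}` form a linear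
map on `P_r` which is injective by A1: the moments with `i ≥ 1` are `Î[(1+t) p' φ]` for `φ` running
through the basis `(1+t)^(i-1)` of `P_{r-1}`, so `p' = 0`, and then the moment with `i = 0` gives
`p(-1) = 0`. An injective linear map on a finite-dimensional space is bounded below, so the
coefficients of `p`, and hence `sup_{[-1,1]} |p|`, are bounded by the moments. Pulling back along
`T_n` turns the local quantities into exactly these reference moments (the factor `τ_n/2` of `I_n`
cancels the factor `2/τ_n` of the chain rule), so the constant does not depend on the interval;
vector-valued `φ` are treated componentwise.
-/

open Polynomial

theorem isPolyR_iff_exists_mem_degreeLT {s : ℤ} {n : ℕ} (hsn : s + 1 = n) {φ : ℝ → ℝ} :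
    IsPolyR s φ ↔ ∃ p ∈ degreeLT ℝ n, ∀ x, φ x = p.eval x := by
  simp only [IsPolyR, mem_degreeLT, degree_lt_iff_coeff_zero]
  refine exists_congr fun p => and_congr_left fun _ => forall_congr' fun m => ?_
  exact imp_congr_left (by omega)

theorem derivative_mem_degreeLT {R : Type*} [Semiring R] {n : ℕ} {p : R[X]}
    (hp : p ∈ degreeLT R (n + 1)) : derivative p ∈ degreeLT R n := by
  rw [mem_degreeLT, degree_lt_iff_coeff_zero] at hp ⊢
  intro m hm
  rw [coeff_derivative, hp (m + 1) (by omega), zero_mul]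

theorem eval_eq_sum_taylor_of_mem_degreeLT {R : Type*} [CommRing R] {n : ℕ} {q : R[X]}
    (hq : q ∈ degreeLT R n) (x : R) :
    q.eval x = ∑ l : Fin n, (taylor (-1) q).coeff l * (1 + x) ^ (l : ℕ) := by
  have htq : taylor (-1) q ∈ degreeLT R n := by
    rwa [mem_degreeLT, degree_taylor, ← mem_degreeLT]
  have := eval_eq_sum_degreeLTEquiv htq (1 + x)
  rwa [taylor_eval, add_neg_cancel_comm] at this

theorem abs_eval_le_of_mem_degreeLT {n : ℕ} {p : ℝ[X]} (hp : p ∈ degreeLT ℝ n) {x : ℝ}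
    (hx : |x| ≤ 1) : |p.eval x| ≤ n * ‖degreeLTEquiv ℝ n ⟨p, hp⟩‖ := by
  rw [eval_eq_sum_degreeLTEquiv hp]
  calc |∑ i, degreeLTEquiv ℝ n ⟨p, hp⟩ i * x ^ (i : ℕ)|
      ≤ ∑ _i : Fin n, ‖degreeLTEquiv ℝ n ⟨p, hp⟩‖ := by
        refine (Finset.abs_sum_le_sum_abs _ _).trans (Finset.sum_le_sum fun i _ => ?_)
        rw [abs_mul, abs_pow]
        exact (mul_le_of_le_one_right (abs_nonneg _) (pow_le_one₀ (abs_nonneg x) hx)).trans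
          (norm_le_pi_norm (degreeLTEquiv ℝ n ⟨p, hp⟩) i)
    _ = n * ‖degreeLTEquiv ℝ n ⟨p, hp⟩‖ := by simp

theorem Pi.norm_le_sum_abs {ι : Type*} [Fintype ι] (f : ι → ℝ) : ‖f‖ ≤ ∑ i, |f i| :=
  (pi_norm_le_iff_of_nonneg (Finset.sum_nonneg fun _ _ => abs_nonneg _)).2 fun i =>
    Finset.single_le_sum (f := fun i => |f i|) (fun _ _ => abs_nonneg _) (Finset.mem_univ i)

theorem PiLp.norm_le_sum_norm {ι : Type*} [Fintype ι] {β : ι → Type*}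
    [∀ i, SeminormedAddCommGroup (β i)] (x : PiLp 2 β) : ‖x‖ ≤ ∑ i, ‖x i‖ := by
  rw [PiLp.norm_eq_of_L2]
  calc √(∑ i, ‖x i‖ ^ 2) ≤ √((∑ i, ‖x i‖) ^ 2) :=
        Real.sqrt_le_sqrt (Finset.sum_sq_le_sq_sum_of_nonneg fun _ _ => norm_nonneg _)
    _ = ∑ i, ‖x i‖ := Real.sqrt_sq (Finset.sum_nonneg fun _ _ => norm_nonneg _)

def dgMoments (Ih : (ℝ → ℝ) →ₗ[ℝ] ℝ) (r : ℕ) : ℝ[X] →ₗ[ℝ] Fin (r + 1) → ℝ :=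
  LinearMap.pi fun i =>
    Ih ∘ₗ (LinearMap.pi fun x => (1 + x) ^ (i : ℕ) • (leval x ∘ₗ derivative)) +
      if (i : ℕ) = 0 then leval (-1) else 0

theorem dgMoments_apply (Ih : (ℝ → ℝ) →ₗ[ℝ] ℝ) (r : ℕ) (p : ℝ[X]) (i : Fin (r + 1)) :
    dgMoments Ih r p i = Ih (fun x => (1 + x) ^ (i : ℕ) * p.derivative.eval x) +
      if (i : ℕ) = 0 then p.eval (-1) else 0 := by
  simp only [dgMoments, LinearMap.pi_apply, LinearMap.add_apply]
  split_ifs <;> rfl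

namespace AssumptionA1

variable {Ih : (ℝ → ℝ) →ₗ[ℝ] ℝ} {r : ℕ}

theorem eq_zero_of_forall_moment_eq_zero (hA1 : AssumptionA1 Ih r 0) {ψ : ℝ[X]}
    (hψ : ψ ∈ degreeLT ℝ r)
    (hmom : ∀ l : Fin r, Ih (fun x => (1 + x) ^ ((l : ℕ) + 1) * ψ.eval x) = 0) : ψ = 0 := by
  have hdeg : (r : ℤ) - max 1 0 + 1 = r := by omega
  refine Polynomial.funext fun y => ?_
  rw [eval_zero]
  refine hA1 _ ((isPolyR_iff_exists_mem_degreeLT hdeg).2 ⟨ψ, hψ, fun _ => rfl⟩) (fun φ hφ => ?_) y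
  obtain ⟨q, hq, hφq⟩ := (isPolyR_iff_exists_mem_degreeLT hdeg).1 hφ
  -- for `k = 0` the weight of A1 is `(1 - x) ^ 0 * (1 + x) ^ 1`
  have hweight : (Int.fdiv 0 2).toNat = 0 ∧ (Int.fdiv (0 - 1) 2).natAbs = 1 := by decide
  have hexp : (fun x => (1 - x) ^ (Int.fdiv 0 2).toNat * (1 + x) ^ (Int.fdiv (0 - 1) 2).natAbs *
      (ψ.eval x * φ x)) = ∑ l : Fin r, (taylor (-1) q).coeff l •
        fun x => (1 + x) ^ ((l : ℕ) + 1) * ψ.eval x := by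
    ext x
    simp only [hφq, eval_eq_sum_taylor_of_mem_degreeLT hq, Finset.sum_apply, Pi.smul_apply,
      smul_eq_mul, Finset.mul_sum, hweight]
    exact Finset.sum_congr rfl fun l _ => by ring
  rw [hexp, map_sum]
  simp [hmom]

theorem eq_zero_of_dgMoments_eq_zero (hA1 : AssumptionA1 Ih r 0) {p : ℝ[X]}
    (hp : p ∈ degreeLT ℝ (r + 1)) (hmom : dgMoments Ih r p = 0) : p = 0 := by
  have hder : derivative p = 0 :=
    hA1.eq_zero_of_forall_moment_eq_zero (derivative_mem_degreeLT hp) fun l => by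
      simpa [dgMoments_apply] using congrFun hmom l.succ
  have hval : p.eval (-1) = 0 := by
    simpa [dgMoments_apply, hder, ← Pi.zero_def] using congrFun hmom 0
  rw [eq_C_of_derivative_eq_zero hder] at hval ⊢
  simpa using hval

theorem exists_abs_eval_le_dgMoments (hA1 : AssumptionA1 Ih r 0) :
    ∃ K > 0, ∀ p ∈ degreeLT ℝ (r + 1), ∀ x, |x| ≤ 1 →
      |p.eval x| ≤ K * ∑ i, |dgMoments Ih r p i| := by
  set L := dgMoments Ih r ∘ₗ (degreeLT ℝ (r + 1)).subtype ∘ₗ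
    (degreeLTEquiv ℝ (r + 1)).symm.toLinearMap
  have hL : LinearMap.ker L = ⊥ := by
    refine LinearMap.ker_eq_bot'.2 fun c hc => ?_
    simpa using hA1.eq_zero_of_dgMoments_eq_zero ((degreeLTEquiv ℝ (r + 1)).symm c).2 hc
  obtain ⟨K, hK, hanti⟩ := L.exists_antilipschitzWith hL
  refine ⟨(r + 1) * K, by positivity, fun p hp x hx => ?_⟩
  set c := degreeLTEquiv ℝ (r + 1) ⟨p, hp⟩
  have hLc : L c = dgMoments Ih r p := by simp [L, c]
  calc |p.eval x| ≤ (r + 1 : ℕ) * ‖c‖ := abs_eval_le_of_mem_degreeLT hp hx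
    _ ≤ (r + 1) * (K * ‖L c‖) := by
        push_cast
        gcongr
        exact ZeroHomClass.bound_of_antilipschitz L hanti c
    _ ≤ (r + 1) * K * ∑ i, |dgMoments Ih r p i| := by
        rw [mul_assoc, hLc]
        gcongr
        exact Pi.norm_le_sum_abs _

end AssumptionA1

section Tmap

variable {a b : ℝ}

theorem Tmap_Tinv (hab : a ≠ b) (x : ℝ) : Tmap a b (Tinv a b x) = x := by
  have : b - a ≠ 0 := sub_ne_zero.2 hab.symm
  rw [Tmap, Tinv]; field_simp; ring

theorem Tinv_Tmap (hab : a ≠ b) (y : ℝ) : Tinv a b (Tmap a b y) = y := by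
  have : b - a ≠ 0 := sub_ne_zero.2 hab.symm
  rw [Tmap, Tinv]; field_simp; ring

theorem Tmap_neg_one : Tmap a b (-1) = a := by
  rw [Tmap]; ring

theorem abs_Tinv_le_one (hab : a < b) {x : ℝ} (hx : x ∈ Icc a b) : |Tinv a b x| ≤ 1 := by
  rw [Tinv, abs_div, abs_of_pos (sub_pos.2 hab), div_le_one (sub_pos.2 hab), abs_le]
  constructor <;> linarith [hx.1, hx.2]

def compTmap (a b : ℝ) (p : ℝ[X]) : ℝ[X] := p.comp (C ((b - a) / 2) * X + C ((a + b) / 2))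

theorem eval_compTmap (p : ℝ[X]) (y : ℝ) : (compTmap a b p).eval y = p.eval (Tmap a b y) := by
  simp [compTmap, Tmap, add_comm]

theorem eval_derivative_compTmap (p : ℝ[X]) (y : ℝ) :
    (compTmap a b p).derivative.eval y = (b - a) / 2 * p.derivative.eval (Tmap a b y) := by
  simp only [compTmap, derivative_comp, derivative_add, derivative_C_mul_X, derivative_C,
    add_zero, eval_mul, eval_comp, eval_add, eval_C, eval_X, Tmap, add_comm ((b - a) / 2 * y)]

theorem compTmap_mem_degreeLT {n : ℕ} {p : ℝ[X]} (hp : p ∈ degreeLT ℝ n) :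
    compTmap a b p ∈ degreeLT ℝ n := by
  rcases eq_or_ne p 0 with rfl | hp0
  · simp [compTmap]
  rw [mem_degreeLT] at hp ⊢
  refine degree_le_natDegree.trans_lt ?_
  have hdeg : (compTmap a b p).natDegree ≤ p.natDegree :=
    natDegree_comp_le.trans <| (Nat.mul_le_mul_left p.natDegree natDegree_linear_le).trans_eq
      (mul_one _)
  exact_mod_cast hdeg.trans_lt ((natDegree_lt_iff_degree_lt hp0).2 hp)

end Tmap

theorem deriv_apply_of_forall_eval {d : ℕ} {φ : ℝ → Vec d} {p : Fin d → ℝ[X]}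
    (hφ : ∀ m x, φ x m = (p m).eval x) (x : ℝ) (m : Fin d) :
    deriv φ x m = (p m).derivative.eval x := by
  have hφ' : φ = fun x => WithLp.toLp 2 fun m => (p m).eval x := by
    funext x; ext m; exact hφ m x
  have : HasDerivAt φ (WithLp.toLp 2 fun m => (p m).derivative.eval x) x := by
    rw [hφ']
    exact (PiLp.hasFDerivAt_toLp 2 _).comp_hasDerivAt x
      (hasDerivAt_pi.2 fun m => (p m).hasDerivAt x)
  rw [this.deriv]

theorem locI_moment_apply_eq_dgMoments {d : ℕ} (Ih : (ℝ → ℝ) →ₗ[ℝ] ℝ) (r : ℕ) {a b : ℝ} (hab : a ≠ b)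
    {φ : ℝ → Vec d} {p : Fin d → ℝ[X]} (hφ : ∀ m x, φ x m = (p m).eval x)
    (i : Fin (r + 1)) (m : Fin d) :
    (locI Ih a b (fun x => (1 + Tinv a b x) ^ (i : ℕ) • deriv φ x) +
      (if (i : ℕ) = 0 then φ a else 0)) m = dgMoments Ih r (compTmap a b (p m)) i := by
  have hint : (fun y => (1 + y) ^ (i : ℕ) * (compTmap a b (p m)).derivative.eval y) =
      ((b - a) / 2) • fun y => (1 + Tinv a b (Tmap a b y)) ^ (i : ℕ) * deriv φ (Tmap a b y) m := by
    funext y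
    simp only [eval_derivative_compTmap, Tinv_Tmap hab, deriv_apply_of_forall_eval hφ,
      Pi.smul_apply, smul_eq_mul]
    ring
  rw [dgMoments_apply, hint, Ih.map_smul, eval_compTmap, Tmap_neg_one, ← hφ]
  split_ifs <;> simp [locI, vecI]

/-- Lemma 3.5: the dG (`k = 0`) norm inequality for polynomials on a
mesh interval `(a, b]`. -/
theorem stmt_4 (d : ℕ) (r : ℕ)
    (Ih : (ℝ → ℝ) →ₗ[ℝ] ℝ) (hA1 : AssumptionA1 Ih (r : ℤ) 0) :
    ∃ κ : ℝ, 0 < κ ∧ ∀ a b : ℝ, a < b → ∀ φ : ℝ → Vec d, IsPolyV (r : ℤ) φ →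
      supNorm (Ioc a b) φ ≤
        κ * ∑ i ∈ Finset.range (r + 1),
          ‖locI Ih a b (fun x => (1 + Tinv a b x) ^ i • deriv φ x) +
            (if i = 0 then φ a else 0)‖ := by
  obtain ⟨K, hK, hbound⟩ := hA1.exists_abs_eval_le_dgMoments
  refine ⟨(d + 1) * K, by positivity, fun a b hab φ hφ => ?_⟩
  choose p hp hφp using fun m => (isPolyR_iff_exists_mem_degreeLT rfl).1 (hφ m)
  set G := fun i : ℕ => ‖locI Ih a b (fun x => (1 + Tinv a b x) ^ i • deriv φ x) +
    (if i = 0 then φ a else 0)‖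
  have hmom (m : Fin d) (i : Fin (r + 1)) : |dgMoments Ih r (compTmap a b (p m)) i| ≤ G i := by
    rw [← locI_moment_apply_eq_dgMoments Ih r hab.ne hφp, ← Real.norm_eq_abs]
    exact PiLp.norm_apply_le _ _
  have : Nonempty (Ioc a b) := (nonempty_Ioc.2 hab).to_subtype
  refine ciSup_le fun ⟨x, hx⟩ => ?_
  have hx' : |Tinv a b x| ≤ 1 := abs_Tinv_le_one hab (Ioc_subset_Icc_self hx)
  calc ‖φ x‖ ≤ ∑ m, ‖φ x m‖ := PiLp.norm_le_sum_norm _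
    _ ≤ ∑ _m : Fin d, K * ∑ i ∈ Finset.range (r + 1), G i := Finset.sum_le_sum fun m _ => by
        rw [Real.norm_eq_abs, hφp, ← Tmap_Tinv hab.ne x, ← eval_compTmap,
          ← Fin.sum_univ_eq_sum_range]
        refine (hbound _ (compTmap_mem_degreeLT (hp m)) _ hx').trans ?_
        gcongr with i
        exact hmom m i
    _ ≤ (d + 1) * K * ∑ i ∈ Finset.range (r + 1), G i := by
        rw [Finset.sum_const, Finset.card_univ, Fintype.card_fin, nsmul_eq_mul, ← mul_assoc]
        gcongr
        linarith

end
end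

section
/- Let r, k ∈ ℤ with 0 ≤ k ≤ r and suppose Assumption A1 holds. Then for every v ∈ C^{k_𝒥+1}(cl I_n, ℝ^d) there exists a unique polynomial J_n v ∈ P_r(I_n, ℝ^d) satisfying: (J_n v)^{(i)}(t_{n−1}^+) = v^{(i)}(t_{n−1}^+) for i = 0,…,⌊(k−1)/2⌋ if k ≥ 1; (J_n v)^{(i)}(t_n^-) = v^{(i)}(t_n^-) for i = 1,…,⌊k/2⌋ if k ≥ 2; and I_n[((J_n v)', φ)] + δ_{0,k}·(J_n v)(t_{n−1}^+)·φ(t_{n−1}^+) = I_n[(ℐ_n(v'), φ)] + δ_{0,k}·v(t_{n−1}^+)·φ(t_{n−1}^+) for all φ ∈ P_{r−k}(I_n, ℝ^d); i.e., the local approximation operator J_n is well-defined. -/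
open Set MeasureTheory
open scoped BigOperators RealInnerProductSpace

noncomputable section

open Polynomial

/-!
Componentwise, the defining conditions of `J_n v` are a square linear system for the `r + 1`
coefficients of a polynomial of degree `≤ r`: `⌈k/2⌉` derivative conditions at `t_{n-1}`,
`⌊k/2⌋` at `t_n`, and one variational condition per monomial test function of degree `≤ r - k`.
So it suffices that the homogeneous system has only the trivial solution `P`. The endpoint
conditions factor `P' = (t - t_{n-1})^μ (t - t_n)^β ψ` with `deg ψ ≤ r - max{1,k}`, and testing
against `(t - t_{n-1})^{δ_{0k}} φ(T_n⁻¹ t)` turns the variational condition into the premise of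
Assumption A1 for `ψ ∘ T_n`; hence `ψ = 0`. The constant `P` then vanishes by the condition at
`t_{n-1}`, or for `k = 0` by testing with `φ = 1`.
-/

theorem isPolyR_eval {s : ℤ} {P : ℝ[X]} (h : (P.natDegree : ℤ) ≤ s) :
    IsPolyR s fun x => P.eval x :=
  ⟨P, fun _ hn => coeff_eq_zero_of_natDegree_lt (by omega), fun _ => rfl⟩

theorem IsPolyR.exists_natDegree_le {s : ℤ} {φ : ℝ → ℝ} (h : IsPolyR s φ) :
    ∃ P : ℝ[X], P.natDegree ≤ s.toNat ∧ φ = fun x => P.eval x := by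
  obtain ⟨P, hcoeff, hφ⟩ := h
  exact ⟨P, natDegree_le_iff_coeff_eq_zero.2 fun n hn => hcoeff n (by omega), funext hφ⟩

theorem IsPolyR.natDegree_le {s : ℤ} {P : ℝ[X]} (h : IsPolyR s fun x => P.eval x) :
    P.natDegree ≤ s.toNat := by
  obtain ⟨Q, hQ, hPQ⟩ := h.exists_natDegree_le
  rwa [Polynomial.funext (congrFun hPQ)]

theorem isPolyR_eval_iff_mem_degreeLT {s : ℤ} (hs : 0 ≤ s) {P : ℝ[X]} :
    IsPolyR s (fun x => P.eval x) ↔ P ∈ degreeLT ℝ (s.toNat + 1) := by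
  rw [mem_degreeLT, degree_lt_iff_coeff_zero]
  constructor
  · rintro ⟨Q, hcoeff, hQ⟩ n hn
    rw [Polynomial.funext hQ]
    exact hcoeff n (by omega)
  · exact fun h => ⟨P, fun n hn => h n (by omega), fun _ => rfl⟩

theorem IsPolyR.mul {s t : ℤ} {φ ψ : ℝ → ℝ} (hφ : IsPolyR s φ) (hψ : IsPolyR t ψ) :
    IsPolyR (s + t) fun x => φ x * ψ x := by
  obtain ⟨P, hP, hφP⟩ := hφ
  obtain ⟨Q, hQ, hψQ⟩ := hψ
  refine ⟨P * Q, fun n hn => ?_, fun x => by simp [hφP, hψQ]⟩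
  rw [coeff_mul]
  refine Finset.sum_eq_zero fun ij hij => ?_
  rw [Finset.HasAntidiagonal.mem_antidiagonal] at hij
  rcases lt_or_ge s ij.1 with h | h
  · rw [hP _ h, zero_mul]
  · rw [hQ _ (by omega), mul_zero]

theorem IsPolyR.comp_affine {s : ℤ} {φ : ℝ → ℝ} (hφ : IsPolyR s φ) (c e : ℝ) :
    IsPolyR s fun x => φ (c * x + e) := by
  obtain ⟨P, hP, hφP⟩ := hφ
  refine ⟨P.comp (C c * X + C e), fun n hn => ?_, fun x => by simp [hφP]⟩
  by_cases hs : s < 0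
  · rw [show P = 0 from ext fun m => by simpa using hP m (by omega), zero_comp, coeff_zero]
  · have hdeg : P.natDegree ≤ s.toNat :=
      natDegree_le_iff_coeff_eq_zero.2 fun m hm => hP m (by omega)
    have hcomp := (natDegree_comp_le (p := P) (q := C c * X + C e)).trans
      (Nat.mul_le_mul hdeg natDegree_linear_le)
    exact coeff_eq_zero_of_natDegree_lt (by omega)

theorem tinv_tmap {a b : ℝ} (hab : a ≠ b) (x : ℝ) : Tinv a b (Tmap a b x) = x := by
  have : b - a ≠ 0 := sub_ne_zero.2 hab.symm
  simp only [Tmap, Tinv]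
  field_simp
  ring

theorem tmap_tinv {a b : ℝ} (hab : a ≠ b) (x : ℝ) : Tmap a b (Tinv a b x) = x := by
  have : b - a ≠ 0 := sub_ne_zero.2 hab.symm
  simp only [Tmap, Tinv]
  field_simp
  ring

theorem IsPolyR.comp_tmap {s : ℤ} {φ : ℝ → ℝ} (hφ : IsPolyR s φ) (a b : ℝ) :
    IsPolyR s fun x => φ (Tmap a b x) := by
  convert hφ.comp_affine ((b - a) / 2) ((a + b) / 2) using 3 with x
  rw [Tmap, add_comm]

theorem IsPolyR.comp_tinv {s : ℤ} {φ : ℝ → ℝ} (hφ : IsPolyR s φ) (a b : ℝ) :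
    IsPolyR s fun x => φ (Tinv a b x) := by
  convert hφ.comp_affine (2 / (b - a)) (-(a + b) / (b - a)) using 3 with x
  rw [Tinv]
  ring

theorem LinearMap.map_eq_zero_of_isPolyR {s : ℤ} (ℓ : (ℝ → ℝ) →ₗ[ℝ] ℝ)
    (h : ∀ j ≤ s.toNat, ℓ (fun x => x ^ j) = 0) {φ : ℝ → ℝ} (hφ : IsPolyR s φ) : ℓ φ = 0 := by
  obtain ⟨P, hdeg, rfl⟩ := hφ.exists_natDegree_le
  have hsum : (fun x => P.eval x) =
      ∑ j ∈ Finset.range (s.toNat + 1), P.coeff j • fun x => x ^ j := by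
    ext x
    simp [eval_eq_sum_range' (Nat.lt_succ_of_le hdeg)]
  rw [hsum, map_sum]
  exact Finset.sum_eq_zero fun j hj => by
    rw [map_smul, h j (Nat.lt_succ_iff.1 (Finset.mem_range.1 hj)), smul_zero]

theorem pow_X_sub_C_dvd_of_iterate_derivative_eval_eq_zero {R : Type*} [CommRing R] [IsDomain R]
    [CharZero R] {Q : R[X]} (hQ : Q ≠ 0) {t : R} {m : ℕ}
    (h : ∀ i < m, (derivative^[i] Q).eval t = 0) : (X - C t) ^ m ∣ Q := by
  rw [← le_rootMultiplicity_iff hQ]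
  rcases m with _ | m
  · exact Nat.zero_le _
  · exact lt_rootMultiplicity_of_isRoot_iterate_derivative hQ fun i hi => h i (by omega)

theorem exists_eq_X_sub_C_pow_mul_X_sub_C_pow_mul {K : Type*} [Field K] [CharZero K] {Q : K[X]}
    (hQ : Q ≠ 0) {a b : K} (hab : a ≠ b) {m n : ℕ} (ha : ∀ i < m, (derivative^[i] Q).eval a = 0)
    (hb : ∀ i < n, (derivative^[i] Q).eval b = 0) :
    ∃ ψ : K[X], Q = (X - C a) ^ m * (X - C b) ^ n * ψ :=
  ((isCoprime_X_sub_C_of_isUnit_sub (sub_ne_zero.2 hab).isUnit).pow.mul_dvd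
    (pow_X_sub_C_dvd_of_iterate_derivative_eval_eq_zero hQ ha)
    (pow_X_sub_C_dvd_of_iterate_derivative_eval_eq_zero hQ hb))

theorem eval_X_sub_C_pow_mul_X_sub_C_pow_mul_tmap {a b : ℝ} (hab : a ≠ b) (μ β e : ℕ)
    (ψ : ℝ[X]) (φ : ℝ → ℝ) (x : ℝ) :
    ((X - C a) ^ μ * (X - C b) ^ β * ψ).eval (Tmap a b x) *
        ((Tmap a b x - a) ^ e * φ (Tinv a b (Tmap a b x))) =
      ((b - a) / 2) ^ (μ + β + e) * (-1) ^ β *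
        ((1 - x) ^ β * (1 + x) ^ (μ + e) * (ψ.eval (Tmap a b x) * φ x)) := by
  have ha : Tmap a b x - a = (b - a) / 2 * (1 + x) := by rw [Tmap]; ring
  have hb : Tmap a b x - b = (b - a) / 2 * (1 - x) * -1 := by rw [Tmap]; ring
  simp only [eval_mul, eval_pow, eval_sub, eval_X, eval_C, ha, hb, tinv_tmap hab, mul_pow]
  ring

theorem Submodule.existsUnique_mem_and_apply_eq {K V Y : Type*} [DivisionRing K] [AddCommGroup V]
    [Module K V] [AddCommGroup Y] [Module K Y] [FiniteDimensional K Y] (W : Submodule K V)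
    [FiniteDimensional K W] (L : V →ₗ[K] Y) (hdim : Module.finrank K W = Module.finrank K Y)
    (hinj : ∀ x ∈ W, L x = 0 → x = 0) (y : Y) : ∃! x, x ∈ W ∧ L x = y := by
  have hinj' : Function.Injective (L ∘ₗ W.subtype) := by
    rw [← LinearMap.ker_eq_bot, Submodule.eq_bot_iff]
    exact fun x hx => Subtype.ext (hinj x x.2 hx)
  obtain ⟨x, hx⟩ := (LinearMap.injective_iff_surjective_of_finrank_eq_finrank hdim).1 hinj' y
  refine ⟨x, ⟨x.2, hx⟩, fun x' ⟨hx'W, hx'⟩ => ?_⟩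
  rw [← sub_eq_zero]
  exact hinj _ (W.sub_mem hx'W x.2) (by simp [hx', ← hx])

def vecPoly {d : ℕ} (P : Fin d → ℝ[X]) (t : ℝ) : Vec d :=
  WithLp.toLp 2 fun j => (P j).eval t

@[simp]
theorem vecPoly_apply {d : ℕ} (P : Fin d → ℝ[X]) (t : ℝ) (j : Fin d) :
    vecPoly P t j = (P j).eval t :=
  rfl

theorem hasDerivAt_vecPoly {d : ℕ} (P : Fin d → ℝ[X]) (x : ℝ) :
    HasDerivAt (vecPoly P) (vecPoly (fun j => derivative (P j)) x) x :=
  (PiLp.continuousLinearEquiv 2 ℝ (fun _ : Fin d => ℝ)).symm.hasFDerivAt.comp_hasDerivAt x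
    (hasDerivAt_pi.2 fun j => (P j).hasDerivAt x)

theorem iteratedDeriv_vecPoly {d : ℕ} (P : Fin d → ℝ[X]) (n : ℕ) :
    iteratedDeriv n (vecPoly P) = vecPoly fun j => derivative^[n] (P j) := by
  induction n with
  | zero => simp
  | succ n ih =>
    ext1 x
    rw [iteratedDeriv_succ, ih, (hasDerivAt_vecPoly _ x).deriv]
    simp only [Function.iterate_succ_apply']

theorem deriv_vecPoly {d : ℕ} (P : Fin d → ℝ[X]) :
    deriv (vecPoly P) = vecPoly fun j => derivative (P j) := by
  simpa using iteratedDeriv_vecPoly P 1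

theorem IsPolyV.exists_eq_vecPoly {d : ℕ} {s : ℤ} {w : ℝ → Vec d} (h : IsPolyV s w) :
    ∃ P : Fin d → ℝ[X], w = vecPoly P := by
  choose P _ hP using h
  exact ⟨P, funext fun x => PiLp.ext fun j => hP j x⟩

theorem locIs_add (Ih : (ℝ → ℝ) →ₗ[ℝ] ℝ) (a b : ℝ) (f g : ℝ → ℝ) :
    locIs Ih a b (fun x => f x + g x) = locIs Ih a b f + locIs Ih a b g := by
  simp only [locIs, ← mul_add, ← map_add]
  rfl

theorem locIs_smul (Ih : (ℝ → ℝ) →ₗ[ℝ] ℝ) (a b c : ℝ) (f : ℝ → ℝ) :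
    locIs Ih a b (fun x => c * f x) = c * locIs Ih a b f := by
  simp only [locIs, mul_left_comm c, ← smul_eq_mul c, ← map_smul]
  rfl

theorem locIs_sum {ι : Type*} (Ih : (ℝ → ℝ) →ₗ[ℝ] ℝ) (a b : ℝ) (s : Finset ι) (f : ι → ℝ → ℝ) :
    locIs Ih a b (fun x => ∑ j ∈ s, f j x) = ∑ j ∈ s, locIs Ih a b (f j) := by
  simp only [locIs, ← Finset.mul_sum, ← map_sum]
  congr 2
  ext x
  simp

def testPairing (Ih : (ℝ → ℝ) →ₗ[ℝ] ℝ) (k : ℤ) (a b : ℝ) :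
    (ℝ → ℝ) × ℝ →ₗ[ℝ] (ℝ → ℝ) →ₗ[ℝ] ℝ :=
  LinearMap.mk₂ ℝ
    (fun fp φ => locIs Ih a b (fun x => fp.1 x * φ x) + if k = 0 then fp.2 * φ a else 0)
    (fun _ _ _ => by
      simp only [Prod.fst_add, Prod.snd_add, Pi.add_apply, add_mul, locIs_add]
      split_ifs <;> ring)
    (fun _ _ _ => by
      simp only [Prod.smul_fst, Prod.smul_snd, Pi.smul_apply, smul_eq_mul, mul_assoc, locIs_smul]
      split_ifs <;> ring)
    (fun _ _ _ => by
      simp only [Pi.add_apply, mul_add, locIs_add]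
      split_ifs <;> ring)
    (fun _ _ _ => by
      simp only [Pi.smul_apply, smul_eq_mul, mul_left_comm _ _ (_ : ℝ), locIs_smul]
      split_ifs <;> ring)

theorem testPairing_apply (Ih : (ℝ → ℝ) →ₗ[ℝ] ℝ) (k : ℤ) (a b : ℝ) (fp : (ℝ → ℝ) × ℝ)
    (φ : ℝ → ℝ) : testPairing Ih k a b fp φ =
      locIs Ih a b (fun x => fp.1 x * φ x) + if k = 0 then fp.2 * φ a else 0 :=
  rfl

theorem locIs_inner_add_eq_sum {d : ℕ} (Ih : (ℝ → ℝ) →ₗ[ℝ] ℝ) (k : ℤ) (a b : ℝ)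
    (f : ℝ → Vec d) (p : Vec d) (φ : ℝ → Vec d) :
    locIs Ih a b (fun x => ⟪f x, φ x⟫) + (if k = 0 then ⟪p, φ a⟫ else 0) =
      ∑ j, testPairing Ih k a b (fun x => f x j, p j) fun x => φ x j := by
  simp only [testPairing_apply, Finset.sum_add_distrib, PiLp.inner_apply, RCLike.inner_apply,
    conj_trivial, locIs_sum]
  split_ifs <;> simp [mul_comm]

theorem forall_isPolyV_iff_forall_isPolyR {d : ℕ} (Ih : (ℝ → ℝ) →ₗ[ℝ] ℝ) (k s : ℤ) (a b : ℝ)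
    (f g : ℝ → Vec d) (p q : Vec d) :
    (∀ φ : ℝ → Vec d, IsPolyV s φ →
      locIs Ih a b (fun x => ⟪f x, φ x⟫) + (if k = 0 then ⟪p, φ a⟫ else 0) =
        locIs Ih a b (fun x => ⟪g x, φ x⟫) + (if k = 0 then ⟪q, φ a⟫ else 0)) ↔
    ∀ j, ∀ ψ : ℝ → ℝ, IsPolyR s ψ →
      testPairing Ih k a b (fun x => f x j, p j) ψ =
        testPairing Ih k a b (fun x => g x j, q j) ψ := by
  simp only [locIs_inner_add_eq_sum]
  refine ⟨fun h j ψ hψ => ?_, fun h φ hφ => Finset.sum_congr rfl fun j _ => h j _ (hφ j)⟩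
  have hsingle : ∀ (F : ℝ → Vec d) (P : Vec d),
      ∑ i, testPairing Ih k a b (fun x => F x i, P i) (fun x => EuclideanSpace.single j (ψ x) i) =
        testPairing Ih k a b (fun x => F x j, P j) ψ := by
    intro F P
    rw [Finset.sum_eq_single j (fun i _ hij => ?_) (by simp)]
    · simp
    · rw [show (fun x => EuclideanSpace.single j (ψ x) i) = 0 from funext fun x => by simp [hij],
        map_zero]
  have hφ : IsPolyV s fun x => EuclideanSpace.single j (ψ x) := by
    intro i
    by_cases hij : i = j
    · subst hij; simpa using hψ
    · exact ⟨0, by simp, by simp [hij]⟩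
  simpa only [hsingle] using h _ hφ

def JCondScalar (Ih : (ℝ → ℝ) →ₗ[ℝ] ℝ) (r k : ℤ) (a b : ℝ) (A B : ℕ → ℝ) (g : ℝ → ℝ) (c : ℝ)
    (P : ℝ[X]) : Prop :=
  IsPolyR r (fun x => P.eval x) ∧
  (1 ≤ k → ∀ i : ℕ, (i : ℤ) ≤ (k - 1).fdiv 2 → (derivative^[i] P).eval a = A i) ∧
  (2 ≤ k → ∀ i : ℕ, 1 ≤ i → (i : ℤ) ≤ k.fdiv 2 → (derivative^[i] P).eval b = B i) ∧
  ∀ φ : ℝ → ℝ, IsPolyR (r - k) φ →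
    testPairing Ih k a b (fun x => (derivative P).eval x, P.eval a) φ =
      testPairing Ih k a b (g, c) φ

theorem jCondLoc_vecPoly_iff {d : ℕ} (Ih : (ℝ → ℝ) →ₗ[ℝ] ℝ) (Ic : (ℝ → ℝ) →ₗ[ℝ] (ℝ → ℝ))
    (r k : ℤ) (a b : ℝ) (v : ℝ → Vec d) (P : Fin d → ℝ[X]) :
    JCondLoc d Ih Ic r k a b v (vecPoly P) ↔
      ∀ j, JCondScalar Ih r k a b (fun i => iteratedDerivWithin i v (Icc a b) a j)
        (fun i => iteratedDerivWithin i v (Icc a b) b j)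
        (fun x => locOp Ic a b (derivWithin v (Icc a b)) x j) (v a j) (P j) := by
  simp only [JCondLoc, JCondScalar, iteratedDeriv_vecPoly, deriv_vecPoly,
    forall_isPolyV_iff_forall_isPolyR, PiLp.ext_iff, forall_and, vecPoly_apply]
  exact and_congr Iff.rfl <| and_congr
    ⟨fun h j hk i hi => h hk i hi j, fun h hk i hi j => h j hk i hi⟩ <| and_congr
    ⟨fun h j hk i h1 hi => h hk i h1 hi j, fun h hk i h1 hi j => h j hk i h1 hi⟩ Iff.rfl

abbrev JSpace (r k : ℤ) : Type :=
  (Fin ((k - 1).fdiv 2 + 1).toNat → ℝ) × (Fin (k.fdiv 2).toNat → ℝ) × (Fin ((r - k).toNat + 1) → ℝ)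

theorem finrank_jSpace {r k : ℤ} (h0k : 0 ≤ k) (hkr : k ≤ r) :
    Module.finrank ℝ (JSpace r k) = r.toNat + 1 := by
  simp only [Module.finrank_prod, Module.finrank_fin_fun]
  rw [Int.fdiv_eq_ediv_of_nonneg _ zero_le_two, Int.fdiv_eq_ediv_of_nonneg _ zero_le_two]
  omega

def jValues (Ih : (ℝ → ℝ) →ₗ[ℝ] ℝ) (r k : ℤ) (a b : ℝ) (A B : ℕ → ℝ) (g : ℝ → ℝ) (c : ℝ) :
    JSpace r k :=
  (fun i => A i, fun i => B (i + 1), fun j => testPairing Ih k a b (g, c) fun x => x ^ (j : ℕ))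

def jValuesMap (Ih : (ℝ → ℝ) →ₗ[ℝ] ℝ) (r k : ℤ) (a b : ℝ) : ℝ[X] →ₗ[ℝ] JSpace r k :=
  (LinearMap.pi fun i : Fin _ => leval a ∘ₗ derivative ^ (i : ℕ)).prod <|
    (LinearMap.pi fun i : Fin _ => leval b ∘ₗ derivative ^ ((i : ℕ) + 1)).prod <|
      LinearMap.pi fun j : Fin _ => (testPairing Ih k a b).flip (fun x => x ^ (j : ℕ)) ∘ₗ
        ((LinearMap.pi fun x => leval x) ∘ₗ derivative).prod (leval a)

theorem jValuesMap_apply (Ih : (ℝ → ℝ) →ₗ[ℝ] ℝ) (r k : ℤ) (a b : ℝ) (P : ℝ[X]) :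
    jValuesMap Ih r k a b P = jValues Ih r k a b (fun i => (derivative^[i] P).eval a)
      (fun i => (derivative^[i] P).eval b) (fun x => (derivative P).eval x) (P.eval a) := by
  ext i <;> simp [jValuesMap, jValues, Module.End.pow_apply]
  rfl

theorem jCondScalar_iff {Ih : (ℝ → ℝ) →ₗ[ℝ] ℝ} {r k : ℤ} (h0k : 0 ≤ k) (hkr : k ≤ r) {a b : ℝ}
    {A B : ℕ → ℝ} {g : ℝ → ℝ} {c : ℝ} {P : ℝ[X]} :
    JCondScalar Ih r k a b A B g c P ↔
      P ∈ degreeLT ℝ (r.toNat + 1) ∧ jValuesMap Ih r k a b P = jValues Ih r k a b A B g c := by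
  have e1 := Int.fdiv_eq_ediv_of_nonneg (k - 1) zero_le_two
  have e2 := Int.fdiv_eq_ediv_of_nonneg k zero_le_two
  rw [jValuesMap_apply, JCondScalar, isPolyR_eval_iff_mem_degreeLT (h0k.trans hkr)]
  simp only [jValues, Prod.mk.injEq, funext_iff, Fin.forall_iff, e1, e2]
  refine and_congr Iff.rfl (and_congr ?_ (and_congr ?_ ?_))
  · exact ⟨fun h i hi => h (by omega) i (by omega), fun h _ i hi => h i (by omega)⟩
  · refine ⟨fun h i hi => h (by omega) (i + 1) (by omega) (by omega), fun h _ i h1 hi => ?_⟩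
    obtain ⟨i, rfl⟩ := Nat.exists_eq_add_of_le' h1
    exact h i (by omega)
  · refine ⟨fun h j hj => h _ ?_, fun h φ hφ => ?_⟩
    · simpa using isPolyR_eval (P := (X ^ j : ℝ[X])) (by simp; omega)
    · rw [← sub_eq_zero, ← LinearMap.sub_apply]
      refine LinearMap.map_eq_zero_of_isPolyR _ (fun j hj => ?_) hφ
      rw [LinearMap.sub_apply, sub_eq_zero]
      exact h j (by omega)

theorem JCondScalar.exists_derivative_eq_mul {Ih : (ℝ → ℝ) →ₗ[ℝ] ℝ} {r k : ℤ} (h0k : 0 ≤ k)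
    {a b : ℝ} (hab : a ≠ b) {P : ℝ[X]} (hP : JCondScalar Ih r k a b 0 0 0 0 P)
    (hq : derivative P ≠ 0) :
    ∃ ψ : ℝ[X], derivative P =
        (X - C a) ^ ((k - 1).fdiv 2).toNat * (X - C b) ^ (k.fdiv 2).toNat * ψ ∧
      (ψ.natDegree : ℤ) ≤ r - max 1 k := by
  obtain ⟨hdeg, ha, hb, -⟩ := hP
  have e1 := Int.fdiv_eq_ediv_of_nonneg (k - 1) zero_le_two
  have e2 := Int.fdiv_eq_ediv_of_nonneg k zero_le_two
  obtain ⟨ψ, hψ⟩ := exists_eq_X_sub_C_pow_mul_X_sub_C_pow_mul hq hab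
    (m := ((k - 1).fdiv 2).toNat) (n := (k.fdiv 2).toNat)
    (fun i hi => by rw [← Function.iterate_succ_apply]; exact ha (by omega) _ (by omega))
    (fun i hi => by
      rw [← Function.iterate_succ_apply]; exact hb (by omega) _ (by omega) (by omega))
  refine ⟨ψ, hψ, ?_⟩
  have hψ0 : ψ ≠ 0 := by rintro rfl; exact hq (by simpa using hψ)
  have h := (natDegree_derivative_le P).trans (Nat.sub_le_sub_right hdeg.natDegree_le 1)
  rw [hψ, natDegree_mul (mul_ne_zero (pow_ne_zero _ (X_sub_C_ne_zero a))
    (pow_ne_zero _ (X_sub_C_ne_zero b))) hψ0,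
    natDegree_mul (pow_ne_zero _ (X_sub_C_ne_zero a)) (pow_ne_zero _ (X_sub_C_ne_zero b)),
    natDegree_pow, natDegree_pow, natDegree_X_sub_C, natDegree_X_sub_C] at h
  have hP1 : P.natDegree ≠ 0 := fun h0 => hq (derivative_of_natDegree_zero h0)
  have := hdeg.natDegree_le
  omega

theorem derivative_eq_zero_of_jCondScalar_zero {Ih : (ℝ → ℝ) →ₗ[ℝ] ℝ} {r k : ℤ} (h0k : 0 ≤ k)
    (hA1 : AssumptionA1 Ih r k) {a b : ℝ} (hab : a < b) {P : ℝ[X]}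
    (hP : JCondScalar Ih r k a b 0 0 0 0 P) : derivative P = 0 := by
  by_contra hq
  obtain ⟨ψ, hψ, hψdeg⟩ := hP.exists_derivative_eq_mul h0k hab.ne hq
  set μ := ((k - 1).fdiv 2).toNat with hμ
  set β := (k.fdiv 2).toNat
  -- For `k = 0` the test function carries an extra factor `y - a`: it kills the boundary term
  -- and supplies the extra power of `1 + x` in the weight of Assumption A1.
  set e : ℕ := if k = 0 then 1 else 0 with he
  have hψT : ∀ x, ψ.eval (Tmap a b x) = 0 := by
    refine hA1 _ ((isPolyR_eval hψdeg).comp_tmap a b) fun φ hφ => ?_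
    have hφt : IsPolyR (r - k) fun y => (y - a) ^ e * φ (Tinv a b y) := by
      convert (isPolyR_eval (P := (X - C a) ^ e) (s := e) (by simp)).mul (hφ.comp_tinv a b)
        using 1
      · rcases eq_or_ne k 0 with hk | hk
        · simp [he, hk]
        · simp [he, hk]; omega
      · simp
    have hbdry : (if k = 0 then P.eval a * ((a - a) ^ e * φ (Tinv a b a)) else 0) = 0 := by
      split_ifs with hk <;> simp [he, hk]
    have hexp : ((k - 1).fdiv 2).natAbs = μ + e := by
      rcases eq_or_ne k 0 with hk | hk
      · simp [he, hμ, hk]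
      · simp [he, hμ, hk, Int.fdiv_eq_ediv_of_nonneg]; omega
    have hint : (fun y => (derivative P).eval y * ((y - a) ^ e * φ (Tinv a b y))) ∘ Tmap a b =
        (((b - a) / 2) ^ (μ + β + e) * (-1) ^ β) •
          fun x => (1 - x) ^ β * (1 + x) ^ (μ + e) * (ψ.eval (Tmap a b x) * φ x) := by
      ext x
      rw [Function.comp_apply, hψ, eval_X_sub_C_pow_mul_X_sub_C_pow_mul_tmap hab.ne]
      rfl
    have h := hP.2.2.2 _ hφt
    simp only [testPairing_apply, hbdry, add_zero, Prod.mk_zero_zero, map_zero,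
      LinearMap.zero_apply, locIs, hint, map_smul, smul_eq_mul] at h
    rw [hexp]
    have hba : (b - a) / 2 ≠ 0 := by linarith
    simpa [hba] using h
  have hψ0 : ψ = 0 :=
    Polynomial.funext fun y => by simpa [tmap_tinv hab.ne] using hψT (Tinv a b y)
  exact hq (by rw [hψ, hψ0, mul_zero])

theorem JCondScalar.eq_zero {Ih : (ℝ → ℝ) →ₗ[ℝ] ℝ} {r k : ℤ} (h0k : 0 ≤ k) (hkr : k ≤ r)
    (hA1 : AssumptionA1 Ih r k) {a b : ℝ} (hab : a < b) {P : ℝ[X]}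
    (hP : JCondScalar Ih r k a b 0 0 0 0 P) : P = 0 := by
  obtain ⟨c, rfl⟩ : ∃ c, P = C c :=
    ⟨_, eq_C_of_derivative_eq_zero (derivative_eq_zero_of_jCondScalar_zero h0k hA1 hab hP)⟩
  obtain ⟨-, ha, -, hvar⟩ := hP
  rcases eq_or_ne k 0 with hk | hk
  · have hone : IsPolyR (r - k) fun _ => 1 := by
      simpa using isPolyR_eval (P := (1 : ℝ[X])) (s := r - k) (by simp; omega)
    simpa [hk, locIs, testPairing_apply] using hvar _ hone
  · simpa using ha (by omega) 0 (by simp [Int.fdiv_eq_ediv_of_nonneg]; omega)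

theorem existsUnique_jCondScalar {Ih : (ℝ → ℝ) →ₗ[ℝ] ℝ} {r k : ℤ} (h0k : 0 ≤ k) (hkr : k ≤ r)
    (hA1 : AssumptionA1 Ih r k) {a b : ℝ} (hab : a < b) (A B : ℕ → ℝ) (g : ℝ → ℝ) (c : ℝ) :
    ∃! P, JCondScalar Ih r k a b A B g c P := by
  simp only [jCondScalar_iff h0k hkr]
  refine (degreeLT ℝ (r.toNat + 1)).existsUnique_mem_and_apply_eq _ ?_ (fun P hP h0 => ?_) _
  · rw [finrank_jSpace h0k hkr, Module.finrank_eq_card_basis (degreeLT.basis ℝ _),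
      Fintype.card_fin]
  · refine JCondScalar.eq_zero h0k hkr hA1 hab ((jCondScalar_iff h0k hkr).2 ⟨hP, ?_⟩)
    rw [h0]
    ext <;> simp [jValues, Prod.mk_zero_zero]

/-- Lemma 4.1: the local approximation operator `J_n` is well-defined:
for every `v ∈ C^{k_𝒥+1}(cl I_n, ℝ^d)` there is a unique `J_n v ∈ P_r(I_n, ℝ^d)`
satisfying the defining conditions. -/
theorem stmt_6 (d : ℕ) (r k : ℤ) (h0k : 0 ≤ k) (hkr : k ≤ r) (kI kIc : ℕ)
    (Ih : (ℝ → ℝ) →ₗ[ℝ] ℝ) (Ic : (ℝ → ℝ) →ₗ[ℝ] (ℝ → ℝ))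
    (hA1 : AssumptionA1 Ih r k) (a b : ℝ) (hab : a < b) :
    ∀ v : ℝ → Vec d, ContDiffOn ℝ ((kJ k kI kIc + 1 : ℕ) : ℕ∞) v (Icc a b) →
      ∃! w : ℝ → Vec d, JCondLoc d Ih Ic r k a b v w := by
  intro v _
  have hscalar := fun j : Fin d => existsUnique_jCondScalar h0k hkr hA1 hab
    (fun i => iteratedDerivWithin i v (Icc a b) a j)
    (fun i => iteratedDerivWithin i v (Icc a b) b j)
    (fun x => locOp Ic a b (derivWithin v (Icc a b)) x j) (v a j)
  choose P hP using fun j => (hscalar j).exists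
  refine ⟨vecPoly P, (jCondLoc_vecPoly_iff Ih Ic r k a b v P).2 hP, fun w hw => ?_⟩
  obtain ⟨Q, rfl⟩ := hw.1.exists_eq_vecPoly
  rw [jCondLoc_vecPoly_iff] at hw
  exact congrArg vecPoly (funext fun j => (hscalar j).unique (hw j) (hP j))

end
end
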